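/- (Gross–Oliveira–Kohn variational principle) Let H be a Hermitian operator on a D-dimensional Hilbert space with increasingly ordered eigenvalues E_1 ≤ … ≤ E_D, and let w ∈ ℝ^D have decreasingly ordered nonnegative entries summing to 1. Then Σ_j w_j E_j = min over density operators Γ with spectrum equal to w (sorted) of Tr(Γ H), and the minimum is attained by Γ = Σ_j w_j |Ψ_j⟩⟨Ψ_j| where Ψ_j are orthonormal eigenvectors of H with eigenvalues E_j. -/

import Mathlib

open scoped ComplexOrder

/-- The vector `v` with entries sorted in decreasing order. -/
noncomputable def sortDesc {d : ℕ} (v : Fin d → ℝ) : Fin d → ℝ :=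
  fun i => v (Tuple.sort (fun j => -v j) i)

/-- Sum of the `k` largest entries of `v`. -/
noncomputable def psum {d : ℕ} (v : Fin d → ℝ) (k : ℕ) : ℝ :=
  ∑ i ∈ Finset.univ.filter (fun i : Fin d => (i : ℕ) < k), sortDesc v i

/-- `v ≺ w` : `v` is majorized by `w`. -/
def Majorizes {d : ℕ} (v w : Fin d → ℝ) : Prop :=
  (∀ k : ℕ, k ≤ d → psum v k ≤ psum w k) ∧ ∑ i, v i = ∑ i, w i

/-!
Write `Γ = U diag(λ) U*` and `H = P diag(E) P*` with `U`, `P` unitary. Then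
`Tr(Γ H) = ∑ᵢⱼ λᵢ |(U* P)ᵢⱼ|² Eⱼ`, and the squared moduli of the entries of the unitary `U* P`
form a doubly stochastic matrix. By Birkhoff's theorem `Tr(Γ H)` is a convex combination of the
sums `∑ᵢ λᵢ E_{σ i}` over permutations `σ`, and by the rearrangement inequality each of them is at
least `∑ᵢ wᵢ Eᵢ`, since `w` is `λ` sorted decreasingly and `E` is increasing. Equality holds for
`Γ = P diag(w) P*`.
-/

open Matrix

theorem Antivary.dotProduct_le_dotProduct_mulVec_of_mem_doublyStochastic
    {R ι : Type*} [Field R] [LinearOrder R] [IsStrictOrderedRing R] [Fintype ι] [DecidableEq ι]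
    {f g : ι → R} (hfg : Antivary f g) {T : Matrix ι ι R} (hT : T ∈ doublyStochastic R ι) :
    f ⬝ᵥ g ≤ f ⬝ᵥ (T *ᵥ g) := by
  obtain ⟨c, hc_nonneg, hc_sum, rfl⟩ := exists_eq_sum_perm_of_mem_doublyStochastic hT
  calc f ⬝ᵥ g = ∑ σ, c σ * (f ⬝ᵥ g) := by rw [← Finset.sum_mul, hc_sum, one_mul]
    _ ≤ ∑ σ, c σ * (f ⬝ᵥ g ∘ σ) :=
      Finset.sum_le_sum fun σ _ =>
        mul_le_mul_of_nonneg_left hfg.sum_mul_le_sum_mul_comp_perm (hc_nonneg σ)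
    _ = f ⬝ᵥ ((∑ σ, c σ • σ.permMatrix R) *ᵥ g) := by
      simp [sum_mulVec, dotProduct_sum, smul_mulVec, permMatrix_mulVec, dotProduct_smul]

namespace Matrix

variable {𝕜 n : Type*} [RCLike 𝕜] [Fintype n] [DecidableEq n]

theorem norm_sq_mem_doublyStochastic_of_mem_unitaryGroup {U : Matrix n n 𝕜}
    (hU : U ∈ unitaryGroup n 𝕜) : of (fun i j => ‖U i j‖ ^ 2) ∈ doublyStochastic ℝ n := by
  refine mem_doublyStochastic_iff_sum.mpr ⟨fun i j => sq_nonneg _, fun i => ?_, fun j => ?_⟩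
  · have h := congrFun (congrFun (mem_unitaryGroup_iff.mp hU) i) i
    simp only [mul_apply, star_apply, one_apply_eq, RCLike.star_def, RCLike.mul_conj] at h
    exact_mod_cast h
  · have h := congrFun (congrFun (mem_unitaryGroup_iff'.mp hU) j) j
    simp only [mul_apply, star_apply, one_apply_eq, RCLike.star_def, mul_comm (starRingEnd 𝕜 _),
      RCLike.mul_conj] at h
    exact_mod_cast h

theorem of_mem_unitaryGroup_of_star_dotProduct {Ψ : n → n → 𝕜}
    (hΨ : ∀ i j, star (Ψ i) ⬝ᵥ Ψ j = if i = j then 1 else 0) :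
    of (fun i j => Ψ j i) ∈ unitaryGroup n 𝕜 := by
  refine mem_unitaryGroup_iff'.mpr (ext fun i j => ?_)
  simpa [mul_apply, one_apply, dotProduct] using hΨ i j

theorem sum_smul_vecMulVec_star {R : Type*} [CommSemiring R] [StarRing R] (c : n → R)
    (Ψ : n → n → R) :
    ∑ j, c j • vecMulVec (Ψ j) (star (Ψ j))
      = of (fun i j => Ψ j i) * diagonal c * star (of fun i j => Ψ j i) := by
  ext i k
  simp only [sum_apply, smul_apply, vecMulVec_apply, mul_apply (M := _ * diagonal c), mul_diagonal,
    star_apply, of_apply, Pi.star_apply, smul_eq_mul]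
  exact Finset.sum_congr rfl fun j _ => by ring

theorem eq_mul_diagonal_mul_star_of_mulVec_eq_smul {H : Matrix n n 𝕜} {Ψ : n → n → 𝕜}
    (hΨ : of (fun i j => Ψ j i) ∈ unitaryGroup n 𝕜) {E : n → 𝕜}
    (heig : ∀ j, H *ᵥ Ψ j = E j • Ψ j) :
    H = of (fun i j => Ψ j i) * diagonal E * star (of fun i j => Ψ j i) := by
  set P : Matrix n n 𝕜 := of fun i j => Ψ j i
  have hHP : H * P = P * diagonal E := by
    ext i j
    rw [mul_diagonal, mul_apply]
    simpa [P, mulVec, dotProduct, mul_comm] using congrFun (heig j) i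
  rw [← hHP, Matrix.mul_assoc, mem_unitaryGroup_iff.mp hΨ, Matrix.mul_one]

theorem trace_diagonal_mul_mul_diagonal_mul_star {R : Type*} [CommSemiring R] [StarRing R]
    (a b : n → R) (M : Matrix n n R) :
    trace (diagonal a * M * diagonal b * star M) = ∑ i, ∑ j, a i * M i j * b j * star (M i j) := by
  refine Finset.sum_congr rfl fun i _ => ?_
  simp only [diag_apply, mul_apply (M := _ * diagonal b), mul_diagonal, diagonal_mul, star_apply]

theorem trace_conj_diagonal_mul_conj_diagonal (U V : Matrix n n 𝕜) (a b : n → ℝ) :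
    trace (U * diagonal (RCLike.ofReal ∘ a) * star U * (V * diagonal (RCLike.ofReal ∘ b) * star V))
      = ((a ⬝ᵥ (of (fun i j => ‖(star U * V) i j‖ ^ 2) *ᵥ b) : ℝ) : 𝕜) := by
  set M := star U * V
  have hstarM : star M = star V * U := by simp [M, star_mul]
  rw [show U * diagonal (RCLike.ofReal ∘ a) * star U * (V * diagonal (RCLike.ofReal ∘ b) * star V)
      = U * (diagonal (RCLike.ofReal ∘ a) * M * diagonal (RCLike.ofReal ∘ b) * star V) by
        simp only [M, Matrix.mul_assoc],
    trace_mul_comm, Matrix.mul_assoc _ (star V), ← hstarM, trace_diagonal_mul_mul_diagonal_mul_star]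
  simp only [dotProduct, mulVec, of_apply, Finset.mul_sum, RCLike.ofReal_sum, RCLike.ofReal_mul,
    RCLike.ofReal_pow, Function.comp_apply]
  refine Finset.sum_congr rfl fun i _ => Finset.sum_congr rfl fun j _ => ?_
  rw [RCLike.star_def, mul_right_comm _ (b j : 𝕜), mul_assoc _ (M i j), RCLike.mul_conj]
  ring

theorem IsHermitian.map_eigenvalues_eq_of_eq_conj_diagonal {A U : Matrix n n 𝕜}
    (hA : A.IsHermitian) (hU : U ∈ unitaryGroup n 𝕜) {v : n → ℝ}
    (h : A = U * diagonal (RCLike.ofReal ∘ v) * star U) :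
    Finset.univ.val.map hA.eigenvalues = Finset.univ.val.map v := by
  have hcharpoly : A.charpoly = ∏ i, (Polynomial.X - Polynomial.C (RCLike.ofReal (v i) : 𝕜)) := by
    rw [h, charpoly_mul_comm, ← Matrix.mul_assoc, mem_unitaryGroup_iff'.mp hU, Matrix.one_mul,
      charpoly_diagonal]
    rfl
  have hroots := hA.roots_charpoly_eq_eigenvalues
  rw [hcharpoly, Polynomial.roots_prod _ _
    (by simp [Finset.prod_ne_zero_iff, Polynomial.X_sub_C_ne_zero])] at hroots
  simpa [Multiset.map_map, Function.comp_def] using (congrArg (Multiset.map RCLike.re) hroots).symm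

end Matrix

theorem eq_of_antitone_of_map_univ_val_eq {α : Type*} [PartialOrder α] {d : ℕ} {u v : Fin d → α}
    (hu : Antitone u) (hv : Antitone v)
    (h : Finset.univ.val.map u = Finset.univ.val.map v) : u = v := by
  rw [Fin.univ_val_map, Fin.univ_val_map, Multiset.coe_eq_coe] at h
  exact List.ofFn_injective (h.eq_of_sortedGE hu.sortedGE_ofFn hv.sortedGE_ofFn)

theorem sortDesc_antitone {d : ℕ} (v : Fin d → ℝ) : Antitone (sortDesc v) :=
  fun _ _ hij => neg_le_neg_iff.mp (Tuple.monotone_sort (fun j => -v j) hij)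

theorem map_univ_val_sortDesc {d : ℕ} (v : Fin d → ℝ) :
    Finset.univ.val.map (sortDesc v) = Finset.univ.val.map v := by
  change Multiset.map (v ∘ Tuple.sort _) _ = _
  rw [← Multiset.map_map v, Multiset.map_univ_val_equiv]

theorem sortDesc_eq_of_antitone_of_map_univ_val_eq {d : ℕ} {u v : Fin d → ℝ} (hv : Antitone v)
    (h : Finset.univ.val.map u = Finset.univ.val.map v) : sortDesc u = v :=
  eq_of_antitone_of_map_univ_val_eq (sortDesc_antitone u) hv ((map_univ_val_sortDesc u).trans h)

theorem sortDesc_dotProduct_le_re_trace_mul {𝕜 : Type*} [RCLike 𝕜] {d : ℕ}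
    {A V : Matrix (Fin d) (Fin d) 𝕜} (hA : A.IsHermitian) (hV : V ∈ unitaryGroup (Fin d) 𝕜)
    {E : Fin d → ℝ} (hE : Monotone E) :
    sortDesc hA.eigenvalues ⬝ᵥ E
      ≤ RCLike.re (trace (A * (V * diagonal (RCLike.ofReal ∘ E) * star V))) := by
  set U : Matrix (Fin d) (Fin d) 𝕜 := (hA.eigenvectorUnitary : Matrix (Fin d) (Fin d) 𝕜)
  set τ := Tuple.sort (fun j => -hA.eigenvalues j)
  set S := of fun i j => ‖(star U * V) i j‖ ^ 2
  have hS : S.submatrix τ id ∈ doublyStochastic ℝ (Fin d) :=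
    reindex_mem_doublyStochastic (e₁ := τ.symm) (e₂ := Equiv.refl _)
      (norm_sq_mem_doublyStochastic_of_mem_unitaryGroup
        (Submonoid.mul_mem _ (Unitary.star_mem hA.eigenvectorUnitary.2) hV))
  have hA_eq : A = U * diagonal (RCLike.ofReal ∘ hA.eigenvalues) * star U := hA.spectral_theorem
  calc sortDesc hA.eigenvalues ⬝ᵥ E ≤ sortDesc hA.eigenvalues ⬝ᵥ (S.submatrix τ id *ᵥ E) :=
        ((sortDesc_antitone _).antivary hE).dotProduct_le_dotProduct_mulVec_of_mem_doublyStochastic hS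
    _ = hA.eigenvalues ⬝ᵥ (S *ᵥ E) := Equiv.sum_comp τ fun i => hA.eigenvalues i * (S *ᵥ E) i
    _ = RCLike.re (trace (U * diagonal (RCLike.ofReal ∘ hA.eigenvalues) * star U
          * (V * diagonal (RCLike.ofReal ∘ E) * star V))) := by
        rw [trace_conj_diagonal_mul_conj_diagonal, RCLike.ofReal_re]
    _ = _ := by rw [← hA_eq]

theorem gross_oliveira_kohn_general {D : ℕ} (H : Matrix (Fin D) (Fin D) ℂ)
    (E : Fin D → ℝ) (hEmono : Monotone E)
    (w : Fin D → ℝ) (hwmono : Antitone w) (hwpos : ∀ j, 0 ≤ w j)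
    (hwsum : ∑ j, w j = 1)
    (Ψ : Fin D → (Fin D → ℂ))
    (hortho : ∀ i j, dotProduct (star (Ψ i)) (Ψ j) = if i = j then (1 : ℂ) else 0)
    (heig : ∀ j, H.mulVec (Ψ j) = (E j : ℂ) • Ψ j) :
    IsLeast {x : ℝ | ∃ Γ : Matrix (Fin D) (Fin D) ℂ, ∃ hΓ : Γ.PosSemidef,
        Γ.trace = 1 ∧ sortDesc hΓ.1.eigenvalues = w ∧ (Γ * H).trace = (x : ℂ)}
      (∑ j, w j * E j) ∧
    ((∑ j, (w j : ℂ) • Matrix.vecMulVec (Ψ j) (star (Ψ j))) * H).trace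
      = ((∑ j, w j * E j : ℝ) : ℂ) := by
  set P : Matrix (Fin D) (Fin D) ℂ := of fun i j => Ψ j i
  have hP : P ∈ unitaryGroup (Fin D) ℂ := of_mem_unitaryGroup_of_star_dotProduct hortho
  have hH : H = P * diagonal (RCLike.ofReal ∘ E) * star P :=
    eq_mul_diagonal_mul_star_of_mulVec_eq_smul hP heig
  have hΓ₀ : ∑ j, (w j : ℂ) • vecMulVec (Ψ j) (star (Ψ j))
      = P * diagonal (RCLike.ofReal ∘ w) * star P := sum_smul_vecMulVec_star _ Ψ
  have hΓ₀_psd : (P * diagonal (RCLike.ofReal ∘ w) * star P).PosSemidef :=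
    (posSemidef_diagonal_iff.mpr fun i => by simpa using hwpos i).mul_mul_conjTranspose_same P
  have htrace : ((P * diagonal (RCLike.ofReal ∘ w) * star P) * H).trace
      = ((∑ j, w j * E j : ℝ) : ℂ) := by
    have hS : of (fun i j => ‖(star P * P) i j‖ ^ 2) = (1 : Matrix (Fin D) (Fin D) ℝ) := by
      ext i j
      simp [mem_unitaryGroup_iff'.mp hP, one_apply, apply_ite]
    rw [hH, trace_conj_diagonal_mul_conj_diagonal, hS, one_mulVec]
    rfl
  refine ⟨⟨⟨_, hΓ₀_psd, ?_, ?_, htrace⟩, ?_⟩, hΓ₀ ▸ htrace⟩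
  · rw [trace_mul_comm, ← Matrix.mul_assoc, mem_unitaryGroup_iff'.mp hP, Matrix.one_mul,
      trace_diagonal]
    simpa using congrArg ((↑) : ℝ → ℂ) hwsum
  · exact sortDesc_eq_of_antitone_of_map_univ_val_eq hwmono
      (hΓ₀_psd.1.map_eigenvalues_eq_of_eq_conj_diagonal hP rfl)
  · rintro x ⟨Γ, hΓ, -, hsort, hx⟩
    have hbound := sortDesc_dotProduct_le_re_trace_mul hΓ.1 hP hEmono
    rw [hsort, ← hH, hx] at hbound
    simpa [dotProduct] using hbound

/-- Gross–Oliveira–Kohn variational principle: for Hermitian `H` with increasingly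
ordered eigenvalues `E` and decreasingly ordered weights `w` summing to 1,
`∑ j, w j * E j` is the minimum of `Tr(Γ H)` over density operators `Γ` with
(sorted) spectrum `w`, attained by `Γ = ∑ j, w j • |Ψ j⟩⟨Ψ j|` with `Ψ j`
orthonormal eigenvectors of `H`. -/
theorem gross_oliveira_kohn {D : ℕ} (H : Matrix (Fin D) (Fin D) ℂ)
    (hH : H.IsHermitian)
    (E : Fin D → ℝ) (hEmono : Monotone E)
    (hEeig : ∃ σ : Equiv.Perm (Fin D), E = hH.eigenvalues ∘ σ)
    (w : Fin D → ℝ) (hwmono : Antitone w) (hwpos : ∀ j, 0 ≤ w j)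
    (hwsum : ∑ j, w j = 1)
    (Ψ : Fin D → (Fin D → ℂ))
    (hortho : ∀ i j, dotProduct (star (Ψ i)) (Ψ j) = if i = j then (1 : ℂ) else 0)
    (heig : ∀ j, H.mulVec (Ψ j) = (E j : ℂ) • Ψ j) :
    IsLeast {x : ℝ | ∃ Γ : Matrix (Fin D) (Fin D) ℂ, ∃ hΓ : Γ.PosSemidef,
        Γ.trace = 1 ∧ sortDesc hΓ.1.eigenvalues = w ∧ (Γ * H).trace = (x : ℂ)}
      (∑ j, w j * E j) ∧
    ((∑ j, (w j : ℂ) • Matrix.vecMulVec (Ψ j) (star (Ψ j))) * H).trace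
      = ((∑ j, w j * E j : ℝ) : ℂ) :=
  gross_oliveira_kohn_general H E hEmono w hwmono hwpos hwsum Ψ hortho heig
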